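/- The group of pairs (α, β) ∈ Sym({1,2,3}) × Sym({a,b,c}) satisfying the diagram-preservation condition ξ(i,j)(x) = y ⟺ ξ(α(i),α(j))(β(x)) = β(y) for the triple ξ(1,2) = ξ(2,3) = ρ, ξ(3,1) = ρ (case (ρ,ρ,ρ⁻¹)) is isomorphic to C₂ ⋉ (C₃ ⊕ C₃) and has order 18: it consists of all (ϱ^k, ρ^m) with ϱ the 3-cycle (1 2 3) and all (σ_i, σ_x) with i ∈ {1,2,3}, x ∈ {a,b,c}. -/

import Mathlib

abbrev Perm3 := Equiv.Perm (Fin 3)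

/-- The 3-cycle (`a ↦ b ↦ c ↦ a` on letters, or `1 ↦ 2 ↦ 3 ↦ 1` on indices;
both encoded as `0 ↦ 1 ↦ 2 ↦ 0` on `Fin 3`). -/
def ρ : Perm3 := finRotate 3

/-- `fixSwap k` is the transposition of `Fin 3` fixing `k`. -/
def fixSwap (k : Fin 3) : Perm3 :=
  match k.val with
  | 0 => Equiv.swap 1 2
  | 1 => Equiv.swap 0 2
  | _ => Equiv.swap 0 1

/-- The perspectivity matrix for the case `(ρ, ρ, ρ⁻¹)`:
`ξ(1,2) = ξ(2,3) = ρ`, `ξ(1,3) = ρ⁻¹` (indices encoded as `0,1,2`). -/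
def xi14 (i j : Fin 3) : Perm3 :=
  match i.val, j.val with
  | 0, 1 => ρ
  | 1, 0 => ρ⁻¹
  | 1, 2 => ρ
  | 2, 1 => ρ⁻¹
  | 0, 2 => ρ⁻¹
  | 2, 0 => ρ
  | _, _ => 1

/-- The pair `(α, β)` preserves the diagram of `ξ`. -/
def Pres (xi : Fin 3 → Fin 3 → Perm3) (α β : Perm3) : Prop :=
  ∀ i j x y : Fin 3, i ≠ j → (xi i j x = y ↔ xi (α i) (α j) (β x) = β y)

/-!
On `Fin 3 = ℤ/3`, `ρ` is `x ↦ x + 1`, so `ξ(i,j)` is translation by `j - i` and `(α, β)` preserves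
the diagram iff `β (x + (j - i)) = β x + (α j - α i)` for all `i, j, x`. Over any abelian group
this says that `α` and `β` are affine with a common linear part `f`, and on `ℤ/3` the injective
endomorphisms are `±id`. Linear part `id` gives the pairs of rotations `(ρ^k, ρ^m)`, linear part
`-id` the pairs of reflections `x ↦ c - x`, which are the transpositions.
-/

theorem map_add_sub_eq_iff_exists_addMonoidHom {G : Type*} [AddCommGroup G] (α β : G → G) :
    (∀ i j x, β (x + (j - i)) = β x + (α j - α i)) ↔
      ∃ (f : G →+ G) (a b : G), ∀ x, α x = f x + a ∧ β x = f x + b := by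
  constructor
  · intro h
    have hαβ : ∀ x, α x - α 0 = β x - β 0 := fun x => by
      have := h 0 x 0
      simp only [zero_add, sub_zero] at this
      rw [this]; abel
    let f : G →+ G := AddMonoidHom.mk' (fun x => β x - β 0) fun x y => by
      have := h 0 x y
      simp only [sub_zero] at this
      rw [add_comm x y, this, hαβ]; abel
    refine ⟨f, α 0, β 0, fun x => ⟨?_, (sub_add_cancel _ _).symm⟩⟩
    simp only [f, AddMonoidHom.mk'_apply, ← hαβ, sub_add_cancel]
  · rintro ⟨f, a, b, hf⟩ i j x
    simp only [(hf _).1, (hf _).2, map_add, map_sub]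
    abel

theorem xi14_apply (i j x : Fin 3) : xi14 i j x = x + (j - i) := by
  revert i j x; decide

theorem pres_xi14_iff (α β : Perm3) :
    Pres xi14 α β ↔ ∀ i j x, β (x + (j - i)) = β x + (α j - α i) := by
  simp only [Pres, xi14_apply]
  constructor
  · intro h i j x
    rcases eq_or_ne i j with rfl | hij
    · simp
    · exact ((h i j x _ hij).1 rfl).symm
  · intro h i j x y _
    rw [← h, β.injective.eq_iff]

theorem AddMonoidHom.eq_id_or_eq_neg_id_of_injective_fin_three (f : Fin 3 →+ Fin 3)
    (hf : Function.Injective f) : f = .id _ ∨ f = -.id _ := by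
  have hf2 : f 2 = f 1 + f 1 := by rw [← map_add]; rfl
  have hf1 : f 1 ≠ 0 := fun h => absurd (hf (h.trans (map_zero f).symm)) (by decide)
  obtain h | h : f 1 = 1 ∨ f 1 = 2 := by omega
  · exact .inl (AddMonoidHom.ext fun x => by fin_cases x <;> simp [h, hf2])
  · exact .inr (AddMonoidHom.ext fun x => by fin_cases x <;> simp [h, hf2] <;> decide)

theorem rho_pow_val_apply (a x : Fin 3) : (ρ ^ a.val) x = x + a := by
  revert a x; decide

theorem fixSwap_apply (k x : Fin 3) : fixSwap k x = -x - k := by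
  revert k x; decide

theorem eq_rho_pow_val_iff {α : Perm3} {a : Fin 3} : α = ρ ^ a.val ↔ ∀ x, α x = x + a := by
  simp only [Equiv.ext_iff, rho_pow_val_apply]

theorem eq_fixSwap_iff {α : Perm3} {a : Fin 3} : α = fixSwap a ↔ ∀ x, α x = -x - a := by
  simp only [Equiv.ext_iff, fixSwap_apply]

theorem rho_pow_eq_pow_mod (k : ℕ) : ρ ^ k = ρ ^ (k % 3) :=
  pow_eq_pow_mod k (by decide)

def affinePair : Bool × Fin 3 × Fin 3 → Perm3 × Perm3
  | (false, a, b) => (ρ ^ a.val, ρ ^ b.val)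
  | (true, a, b) => (fixSwap a, fixSwap b)

theorem affinePair_injective : Function.Injective affinePair := by
  decide

theorem pres_xi14_iff_mem_range (α β : Perm3) :
    Pres xi14 α β ↔ (α, β) ∈ Set.range affinePair := by
  rw [pres_xi14_iff, map_add_sub_eq_iff_exists_addMonoidHom]
  constructor
  · rintro ⟨f, a, b, hf⟩
    have hinj : Function.Injective f := fun x y hxy =>
      α.injective (by rw [(hf x).1, (hf y).1, hxy])
    rcases f.eq_id_or_eq_neg_id_of_injective_fin_three hinj with rfl | rfl
    · exact ⟨(false, a, b), Prod.ext (eq_rho_pow_val_iff.2 fun x => (hf x).1).symm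
        (eq_rho_pow_val_iff.2 fun x => (hf x).2).symm⟩
    · exact ⟨(true, -a, -b), Prod.ext (eq_fixSwap_iff.2 fun x => by simp [hf]).symm
        (eq_fixSwap_iff.2 fun x => by simp [hf]).symm⟩
  · rintro ⟨⟨_ | _, a, b⟩, hab⟩ <;> obtain ⟨rfl, rfl⟩ := Prod.mk.inj hab
    · exact ⟨.id _, a, b, fun x => ⟨eq_rho_pow_val_iff.1 rfl x, eq_rho_pow_val_iff.1 rfl x⟩⟩
    · exact ⟨-.id _, -a, -b, fun x => by simp [fixSwap_apply, sub_eq_add_neg]⟩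

/-- For the triple `(ρ, ρ, ρ⁻¹)` the group of diagram-preserving pairs has
order 18 (it is `C₂ ⋉ (C₃ ⊕ C₃)`): it consists of all `(ϱ^k, ρ^m)` and all
`(σ_i, σ_x)`. -/
theorem stmt_14 :
    {p : Perm3 × Perm3 | Pres xi14 p.1 p.2} =
      {p : Perm3 × Perm3 | (∃ k m : ℕ, p = (ρ ^ k, ρ ^ m)) ∨
        (∃ i x : Fin 3, p = (fixSwap i, fixSwap x))} ∧
    Set.ncard {p : Perm3 × Perm3 | Pres xi14 p.1 p.2} = 18 := by
  have hrange : {p : Perm3 × Perm3 | Pres xi14 p.1 p.2} = Set.range affinePair := by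
    ext ⟨α, β⟩; exact pres_xi14_iff_mem_range α β
  refine ⟨?_, by rw [hrange, Set.ncard_range_of_injective affinePair_injective]; simp⟩
  rw [hrange]
  ext p
  constructor
  · rintro ⟨⟨_ | _, a, b⟩, rfl⟩
    · exact .inl ⟨a, b, rfl⟩
    · exact .inr ⟨a, b, rfl⟩
  · rintro (⟨k, m, rfl⟩ | ⟨i, x, rfl⟩)
    · refine ⟨(false, ⟨k % 3, Nat.mod_lt _ three_pos⟩, ⟨m % 3, Nat.mod_lt _ three_pos⟩), ?_⟩
      simp only [affinePair, ← rho_pow_eq_pow_mod]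
    · exact ⟨(true, i, x), rfl⟩
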